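/- arXiv:2207.06266 — 3 statements merged into one kernel-verified Lean document; each statement's English description precedes it below -/
import Mathlib

section
/- The canonical form of the deletion C\n equals the set of pseudo-monomials in CF(J_C) which do not involve the variable x_n: CF(J_{C\n}) = CF(J_C) \ {f ∈ CF(J_C) : x_n or (1−x_n) divides f}. -/
open MvPolynomial

noncomputable section

abbrev PM (n : ℕ) := MvPolynomial (Fin n) (ZMod 2)

/-- A pseudo-monomial in `F₂[x₁,…,xₙ]`. -/
def IsPseudoMonomial {n : ℕ} (f : PM n) : Prop :=
  ∃ σ τ : Finset (Fin n), Disjoint σ τ ∧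
    f = (∏ i ∈ σ, X i) * ∏ j ∈ τ, (1 - X j)

/-- The indicator pseudo-monomial `ρ_σ`. -/
def rho {n : ℕ} (σ : Finset (Fin n)) : PM n :=
  (∏ i ∈ σ, X i) * ∏ j ∈ σᶜ, (1 - X j)

/-- The neural ideal of a code. -/
def neuralIdeal {n : ℕ} (C : Set (Finset (Fin n))) : Ideal (PM n) :=
  Ideal.span {f | ∃ σ ∉ C, f = rho σ}

/-- The canonical form: minimal (under divisibility) pseudo-monomials in the neural ideal. -/
def CF {n : ℕ} (C : Set (Finset (Fin n))) : Set (PM n) :=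
  {f | IsPseudoMonomial f ∧ f ∈ neuralIdeal C ∧
    ∀ g, IsPseudoMonomial g → g ∈ neuralIdeal C → g ∣ f → g = f}

/-- Evaluation of a polynomial at a codeword. -/
def evalAt {n : ℕ} (c : Finset (Fin n)) (f : PM n) : ZMod 2 :=
  MvPolynomial.eval (fun i => if i ∈ c then 1 else 0) f

/-- The standing conventions on codes. -/
def GoodCode {n : ℕ} (C : Set (Finset (Fin n))) : Prop :=
  ∅ ∈ C ∧ (∀ i : Fin n, ∃ c ∈ C, i ∈ c) ∧
    ∀ i j : Fin n, i ≠ j → ¬(∀ c ∈ C, i ∈ c ↔ j ∈ c)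

/-- The interval `[σ,τ]`. -/
def Icc' {n : ℕ} (σ τ : Finset (Fin n)) : Set (Finset (Fin n)) :=
  {γ | σ ⊆ γ ∧ γ ⊆ τ}

/-- The deletion of a neuron from a code (keeping the ambient index set). -/
def del {n : ℕ} (C : Set (Finset (Fin n))) (i : Fin n) : Set (Finset (Fin n)) :=
  (fun c => c.erase i) '' C

/-- The deletion of the last neuron, as a code on `Fin n`. -/
def delLast {n : ℕ} (C : Set (Finset (Fin (n + 1)))) : Set (Finset (Fin n)) :=
  {d | ∃ c ∈ C, d.map Fin.castSuccEmb = c.erase (Fin.last n)}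

/-- Neuron `i` is a `k`-piercing of `C`. -/
def IsPiercing {n : ℕ} (C : Set (Finset (Fin n))) (i : Fin n) (k : ℕ) : Prop :=
  ∃ σ τ : Finset (Fin n), σ ⊆ τ ∧ i ∉ τ ∧ (τ \ σ).card = k ∧
    Icc' σ τ ⊆ del C i ∧
    C = del C i ∪ Icc' (insert i σ) (insert i τ)

/-- `C` is `k`-inductively pierced. -/
inductive InductivelyPierced {n : ℕ} (k : ℕ) : Set (Finset (Fin n)) → Prop
  | empty : InductivelyPierced k {∅}
  | pierce (C : Set (Finset (Fin n))) (i : Fin n) (k' : ℕ) (hk : k' ≤ k)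
      (hp : IsPiercing C i k') (hrec : InductivelyPierced k (del C i)) :
      InductivelyPierced k C

/-- All elements of the canonical form have degree exactly two. -/
def DegreeTwo {n : ℕ} (C : Set (Finset (Fin n))) : Prop :=
  ∀ f ∈ CF C, f.totalDegree = 2

/-- The general relationship graph `G(C)` of a degree two code. -/
def GRel {n : ℕ} (C : Set (Finset (Fin n))) : SimpleGraph (Fin n) where
  Adj i j := i ≠ j ∧ ∀ f ∈ CF C, f.vars ≠ {i, j}
  symm := by
    constructor
    rintro i j ⟨hne, h⟩
    exact ⟨hne.symm, fun f hf => by rw [Finset.pair_comm]; exact h f hf⟩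
  loopless := ⟨fun i h => h.1 rfl⟩

/-- The order relation of `P(C)`: `i < j` iff `xᵢ(1-xⱼ) ∈ CF(J_C)`. -/
def PLt {n : ℕ} (C : Set (Finset (Fin n))) (i j : Fin n) : Prop :=
  X i * (1 - X j) ∈ CF C

/-- A simplicial vertex: its neighborhood is a clique. -/
def IsSimplicial {V : Type*} (G : SimpleGraph V) (v : V) : Prop :=
  G.IsClique (G.neighborSet v)

/-- A chordal graph: every cycle of length at least four has a chord. -/
def IsChordal {V : Type*} (G : SimpleGraph V) : Prop :=
  ∀ (u : V) (w : G.Walk u u), w.IsCycle → 4 ≤ w.length →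
    ∃ a b, G.Adj a b ∧ a ∈ w.support ∧ b ∈ w.support ∧ s(a, b) ∉ w.edges

/-- The code of a collection of sets. -/
def codeOf {X : Type*} {n : ℕ} (U : Fin n → Set X) : Set (Finset (Fin n)) :=
  {σ | ∃ p, ∀ i, p ∈ U i ↔ i ∈ σ}

/-- `S` is a `k`-dimensional sphere: a sphere of positive radius inside a
`(k+1)`-dimensional affine subspace, centered in that subspace. -/
def IsSubSphere {E : Type*} [NormedAddCommGroup E] [NormedSpace ℝ E] (k : ℕ)
    (S : Set E) : Prop :=
  ∃ (A : AffineSubspace ℝ E) (c : E) (ρ : ℝ), 0 < ρ ∧ c ∈ A ∧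
    Module.finrank ℝ A.direction = k + 1 ∧ S = (A : Set E) ∩ Metric.sphere c ρ

/-- The boundary spheres of the balls `B(xᵢ, rᵢ)` form a well-formed collection in `ℝ^d`. -/
def WellFormedBalls {d n : ℕ} (x : Fin n → EuclideanSpace ℝ (Fin d))
    (r : Fin n → ℝ) : Prop :=
  ∀ F : Finset (Fin n), F.Nonempty →
    (F.card ≤ d →
      (⋂ i ∈ F, Metric.sphere (x i) (r i)) = ∅ ∨
        IsSubSphere (d - F.card) (⋂ i ∈ F, Metric.sphere (x i) (r i))) ∧
    (F.card = d + 1 → (⋂ i ∈ F, Metric.sphere (x i) (r i)) = ∅)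

/-- `C` has a well-formed realization by open balls in `ℝ^d`. -/
def HasWFRealization {n : ℕ} (C : Set (Finset (Fin n))) (d : ℕ) : Prop :=
  ∃ (x : Fin n → EuclideanSpace ℝ (Fin d)) (r : Fin n → ℝ),
    (∀ i, 0 < r i) ∧ WellFormedBalls x r ∧
    codeOf (fun i => Metric.ball (x i) (r i)) = C


-- AUX
lemma evalAt_prod_pm {m : ℕ} (c a b : Finset (Fin m)) :
    evalAt c ((∏ i ∈ a, X i) * ∏ j ∈ b, (1 - X j)) =
      if a ⊆ c ∧ Disjoint c b then 1 else 0 := by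
  rw [evalAt]
  simp only [map_mul, map_prod, map_sub, map_one, eval_X]
  have h1 : (∏ i ∈ a, if i ∈ c then (1 : ZMod 2) else 0) = if a ⊆ c then 1 else 0 := by
    split_ifs with h
    · exact Finset.prod_eq_one fun i hi => by simp [h hi]
    · obtain ⟨i, hi, hic⟩ := Finset.not_subset.mp h
      exact Finset.prod_eq_zero hi (by simp [hic])
  have h2 : (∏ j ∈ b, (1 - if j ∈ c then (1 : ZMod 2) else 0)) =
      if Disjoint c b then 1 else 0 := by
    split_ifs with h
    · refine Finset.prod_eq_one fun j hj => ?_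
      rw [if_neg (Finset.disjoint_right.mp h hj), sub_zero]
    · obtain ⟨j, hjc, hjb⟩ := Finset.not_disjoint_iff.mp h
      exact Finset.prod_eq_zero hjb (by simp [hjc])
  rw [h1, h2]
  split_ifs with hh1 hh2 h3 <;> simp_all

lemma pm_eq_sum_rho {m : ℕ} (a b : Finset (Fin m)) (hab : Disjoint a b) :
    (∏ i ∈ a, X i) * ∏ j ∈ b, (1 - X j) =
      ∑ σ ∈ Finset.univ.filter (fun σ => a ⊆ σ ∧ Disjoint σ b), rho σ := by
  classical
  set R := (a ∪ b)ᶜ with hR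
  have key : ∀ ρ ∈ R.powerset,
      rho (a ∪ ρ) = ((∏ i ∈ a, X i) * ∏ j ∈ b, (1 - X j)) *
        ((∏ i ∈ ρ, X i) * ∏ j ∈ R \ ρ, (1 - X j)) := by
    intro ρ hρ
    rw [Finset.mem_powerset] at hρ
    have hρa : Disjoint a ρ := by
      refine Finset.disjoint_left.mpr fun x hx hxρ => ?_
      have := hρ hxρ
      simp [hR, Finset.mem_compl, Finset.mem_union] at this
      exact this.1 hx
    have hcompl : (a ∪ ρ)ᶜ = b ∪ (R \ ρ) := by
      ext x
      have h1 : x ∈ a → x ∉ b := fun h => Finset.disjoint_left.mp hab h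
      have h2 : x ∈ ρ → (x ∉ a ∧ x ∉ b) := fun h => by
        have := hρ h
        simp [hR, Finset.mem_compl, Finset.mem_union] at this
        exact this
      simp only [Finset.mem_compl, Finset.mem_union, Finset.mem_sdiff, hR]
      tauto
    rw [rho, Finset.prod_union hρa, hcompl]
    have hdisj2 : Disjoint b (R \ ρ) := by
      refine Finset.disjoint_left.mpr fun x hx hxm => ?_
      rw [Finset.mem_sdiff] at hxm
      have := hxm.1
      simp [hR, Finset.mem_compl, Finset.mem_union] at this
      exact this.2 hx
    rw [Finset.prod_union hdisj2]
    ring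
  have hbij : ∑ σ ∈ Finset.univ.filter (fun σ => a ⊆ σ ∧ Disjoint σ b), rho σ =
      ∑ ρ ∈ R.powerset, rho (a ∪ ρ) := by
    refine Finset.sum_bij' (fun σ _ => σ \ a) (fun ρ _ => a ∪ ρ) ?_ ?_ ?_ ?_ ?_
    · intro σ hσ
      simp only [Finset.mem_filter, Finset.mem_univ, true_and] at hσ
      rw [Finset.mem_powerset]
      intro x hx
      rw [Finset.mem_sdiff] at hx
      simp only [hR, Finset.mem_compl, Finset.mem_union]
      push_neg
      exact ⟨hx.2, Finset.disjoint_left.mp hσ.2 hx.1⟩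
    · intro ρ hρ
      rw [Finset.mem_powerset] at hρ
      simp only [Finset.mem_filter, Finset.mem_univ, true_and]
      constructor
      · exact Finset.subset_union_left
      · refine Finset.disjoint_left.mpr fun x hx hxb => ?_
        rcases Finset.mem_union.mp hx with h | h
        · exact Finset.disjoint_left.mp hab h hxb
        · have := hρ h
          simp [hR, Finset.mem_compl, Finset.mem_union] at this
          exact this.2 hxb
    · intro σ hσ
      simp only [Finset.mem_filter, Finset.mem_univ, true_and] at hσ
      exact Finset.union_sdiff_of_subset hσ.1
    · intro ρ hρ
      rw [Finset.mem_powerset] at hρ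
      show (a ∪ ρ) \ a = ρ
      rw [Finset.union_sdiff_cancel_left]
      refine Finset.disjoint_left.mpr fun x hx hxρ => ?_
      have := hρ hxρ
      simp [hR, Finset.mem_compl, Finset.mem_union] at this
      exact this.1 hx
    · intro σ hσ
      simp only [Finset.mem_filter, Finset.mem_univ, true_and] at hσ
      show rho σ = rho (a ∪ σ \ a)
      rw [Finset.union_sdiff_of_subset hσ.1]
  rw [hbij, Finset.sum_congr rfl key, ← Finset.mul_sum, ← Finset.prod_add]
  simp

lemma mem_neuralIdeal_iff_vanish {m : ℕ} {C : Set (Finset (Fin m))} {f : PM m}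
    (hf : IsPseudoMonomial f) :
    f ∈ neuralIdeal C ↔ ∀ c ∈ C, evalAt c f = 0 := by
  constructor
  · intro hmem c hc
    have hle : neuralIdeal C ≤
        RingHom.ker (MvPolynomial.eval (fun i => if i ∈ c then (1 : ZMod 2) else 0)) := by
      rw [neuralIdeal, Ideal.span_le]
      rintro _ ⟨σ, hσ, rfl⟩
      have h0 : evalAt c (rho σ) = 0 := by
        rw [rho, evalAt_prod_pm, if_neg]
        rintro ⟨h1, h2⟩
        apply hσ
        have hsc : σ = c := by
          refine Finset.Subset.antisymm h1 fun x hx => ?_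
          by_contra hxσ
          exact Finset.disjoint_left.mp h2 hx (Finset.mem_compl.mpr hxσ)
        rwa [hsc]
      exact h0
    exact hle hmem
  · intro hv
    obtain ⟨a, b, hab, rfl⟩ := hf
    rw [pm_eq_sum_rho a b hab]
    refine Ideal.sum_mem _ fun σ hσ => ?_
    simp only [Finset.mem_filter, Finset.mem_univ, true_and] at hσ
    refine Ideal.subset_span ⟨σ, fun hσC => ?_, rfl⟩
    have h1 := hv σ hσC
    rw [evalAt_prod_pm, if_pos ⟨hσ.1, hσ.2⟩] at h1
    exact one_ne_zero h1

lemma pm_ne_zero {m : ℕ} {f : PM m} (hf : IsPseudoMonomial f) : f ≠ 0 := by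
  obtain ⟨a, b, hab, rfl⟩ := hf
  intro h0
  have h := evalAt_prod_pm a a b
  rw [h0, if_pos ⟨Finset.Subset.refl a, hab⟩] at h
  simp [evalAt] at h

lemma rename_pm_eq {m : ℕ} (a b : Finset (Fin m)) :
    rename Fin.castSucc (((∏ i ∈ a, X i) * ∏ j ∈ b, (1 - X j) : PM m)) =
      ((∏ i ∈ a.map Fin.castSuccEmb, X i) * ∏ j ∈ b.map Fin.castSuccEmb, (1 - X j)
        : PM (m + 1)) := by
  simp only [map_mul, map_prod, map_sub, map_one, rename_X, Finset.prod_map,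
    Fin.coe_castSuccEmb]

lemma pm_rename {m : ℕ} {f : PM m} (hf : IsPseudoMonomial f) :
    IsPseudoMonomial (rename Fin.castSucc f : PM (m + 1)) := by
  obtain ⟨a, b, hab, rfl⟩ := hf
  exact ⟨a.map Fin.castSuccEmb, b.map Fin.castSuccEmb,
    (Finset.disjoint_map _).mpr hab, rename_pm_eq a b⟩

lemma evalAt_rename_of_map {m : ℕ} {c : Finset (Fin (m + 1))} {d : Finset (Fin m)}
    (hd : d.map Fin.castSuccEmb = c.erase (Fin.last m)) (f : PM m) :
    evalAt c (rename Fin.castSucc f) = evalAt d f := by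
  have hfun : ((fun j => if j ∈ c then (1 : ZMod 2) else 0) ∘ Fin.castSucc) =
      (fun i => if i ∈ d then (1 : ZMod 2) else 0) := by
    funext i
    have hmem : i ∈ d ↔ Fin.castSucc i ∈ c := by
      have h1 : i ∈ d ↔ Fin.castSucc i ∈ d.map Fin.castSuccEmb := by
        constructor
        · intro h
          exact Finset.mem_map.mpr ⟨i, h, rfl⟩
        · intro h
          obtain ⟨j, hj, hji⟩ := Finset.mem_map.mp h
          have hj' : j = i := Fin.castSucc_injective m hji
          rwa [hj'] at hj
      rw [h1, hd, Finset.mem_erase]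
      simp [(Fin.castSucc_lt_last i).ne]
    simp [Function.comp, hmem]
  rw [evalAt, evalAt, eval_rename, hfun]

lemma filter_map_eq_erase {m : ℕ} (c : Finset (Fin (m + 1))) :
    (Finset.univ.filter (fun i : Fin m => Fin.castSucc i ∈ c)).map Fin.castSuccEmb
      = c.erase (Fin.last m) := by
  ext j
  simp only [Finset.mem_map, Finset.mem_filter, Finset.mem_univ, true_and, Finset.mem_erase,
    Fin.castSuccEmb, Fin.castAddEmb]
  constructor
  · rintro ⟨i, hi, rfl⟩
    exact ⟨(Fin.castSucc_lt_last i).ne, hi⟩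
  · rintro ⟨hne, hj⟩
    obtain ⟨i, rfl⟩ := Fin.exists_castSucc_eq.mpr hne
    exact ⟨i, hj, rfl⟩

lemma mem_neuralIdeal_rename_iff {m : ℕ} {C : Set (Finset (Fin (m + 1)))} {f : PM m}
    (hf : IsPseudoMonomial f) :
    (rename Fin.castSucc f : PM (m + 1)) ∈ neuralIdeal C ↔ f ∈ neuralIdeal (delLast C) := by
  rw [mem_neuralIdeal_iff_vanish (pm_rename hf), mem_neuralIdeal_iff_vanish hf]
  constructor
  · rintro h d ⟨c, hc, hcd⟩
    rw [← evalAt_rename_of_map hcd]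
    exact h c hc
  · intro h c hc
    rw [evalAt_rename_of_map (filter_map_eq_erase c)]
    exact h _ ⟨c, hc, filter_map_eq_erase c⟩

lemma not_dvd_rename {m : ℕ} {f : PM m} (hf : f ≠ 0) :
    ¬ (X (Fin.last m) ∣ (rename Fin.castSucc f : PM (m + 1))) ∧
    ¬ ((1 - X (Fin.last m)) ∣ (rename Fin.castSucc f : PM (m + 1))) := by
  have key : ∀ v : ZMod 2,
      (aeval (fun j : Fin (m + 1) => if j = Fin.last m then MvPolynomial.C v else X j) :
        PM (m + 1) →ₐ[ZMod 2] PM (m + 1)) (rename Fin.castSucc f) = rename Fin.castSucc f := by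
    intro v
    rw [aeval_rename]
    have hcomp : ((fun j : Fin (m + 1) => if j = Fin.last m then MvPolynomial.C v else X j) ∘
        Fin.castSucc) = fun i : Fin m => (X (Fin.castSucc i) : PM (m + 1)) := by
      funext i
      simp [Function.comp, (Fin.castSucc_lt_last i).ne]
    rw [hcomp, rename_eq_aeval]
    rfl
  constructor
  · rintro ⟨h, hh⟩
    have h2 : (rename Fin.castSucc f : PM (m + 1)) = 0 := by
      conv_lhs => rw [← key 0]
      rw [hh, map_mul, aeval_X, if_pos rfl, map_zero, zero_mul]
    exact hf (rename_injective _ (Fin.castSucc_injective m) (by rw [h2, map_zero]))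
  · rintro ⟨h, hh⟩
    have h2 : (rename Fin.castSucc f : PM (m + 1)) = 0 := by
      conv_lhs => rw [← key 1]
      rw [hh, map_mul, map_sub, map_one, aeval_X, if_pos rfl, map_one, sub_self, zero_mul]
    exact hf (rename_injective _ (Fin.castSucc_injective m) (by rw [h2, map_zero]))

lemma pm_rename_of_not_last {m : ℕ} {f : PM (m + 1)} (hpm : IsPseudoMonomial f)
    (h1 : ¬ X (Fin.last m) ∣ f) (h2 : ¬ (1 - X (Fin.last m)) ∣ f) :
    ∃ f0 : PM m, IsPseudoMonomial f0 ∧ f = rename Fin.castSucc f0 := by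
  obtain ⟨a, b, hab, rfl⟩ := hpm
  have hla : Fin.last m ∉ a := fun h =>
    h1 ((Finset.dvd_prod_of_mem _ h).mul_right _)
  have hlb : Fin.last m ∉ b := fun h =>
    h2 ((Finset.dvd_prod_of_mem _ h).mul_left _)
  set a0 := Finset.univ.filter (fun i : Fin m => Fin.castSucc i ∈ a) with ha0
  set b0 := Finset.univ.filter (fun i : Fin m => Fin.castSucc i ∈ b) with hb0
  have ha : a0.map Fin.castSuccEmb = a := by
    rw [ha0, filter_map_eq_erase, Finset.erase_eq_of_notMem hla]
  have hb : b0.map Fin.castSuccEmb = b := by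
    rw [hb0, filter_map_eq_erase, Finset.erase_eq_of_notMem hlb]
  refine ⟨(∏ i ∈ a0, X i) * ∏ j ∈ b0, (1 - X j), ⟨a0, b0, ?_, rfl⟩, ?_⟩
  · rw [← Finset.disjoint_map Fin.castSuccEmb, ha, hb]
    exact hab
  · rw [rename_pm_eq, ha, hb]

lemma rename_dvd_rename {m : ℕ} {g f : PM m}
    (h : (rename Fin.castSucc g : PM (m + 1)) ∣ rename Fin.castSucc f) : g ∣ f := by
  obtain ⟨h', hh⟩ := h
  have h2 := congrArg (MvPolynomial.killCompl (Fin.castSucc_injective m)) hh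
  rw [map_mul, killCompl_rename_app, killCompl_rename_app] at h2
  exact ⟨_, h2⟩


/-- `CF(J_{C\n})` consists of the elements of `CF(J_C)` not
divisible by `xₙ` or `(1-xₙ)`. -/
theorem CF_deletion {n : ℕ} (C : Set (Finset (Fin (n + 1)))) :
    (fun f : PM n => rename Fin.castSucc f) '' CF (delLast C) =
      CF C \ {f | X (Fin.last n) ∣ f ∨ (1 - X (Fin.last n)) ∣ f} := by
  ext F
  simp only [Set.mem_image, Set.mem_diff, Set.mem_setOf_eq, CF, Set.mem_setOf_eq]
  constructor
  · rintro ⟨f, ⟨hpm, hmem, hmin⟩, rfl⟩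
    have hnd := not_dvd_rename (pm_ne_zero hpm)
    refine ⟨⟨pm_rename hpm, (mem_neuralIdeal_rename_iff hpm).mpr hmem, ?_⟩,
      fun h => h.elim hnd.1 hnd.2⟩
    intro g hgpm hgmem hgdvd
    obtain ⟨g0, hg0pm, rfl⟩ := pm_rename_of_not_last hgpm
      (fun h => hnd.1 (h.trans hgdvd)) (fun h => hnd.2 (h.trans hgdvd))
    rw [hmin g0 hg0pm ((mem_neuralIdeal_rename_iff hg0pm).mp hgmem) (rename_dvd_rename hgdvd)]
  · rintro ⟨⟨hpm, hmem, hmin⟩, hnd⟩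
    rw [not_or] at hnd
    obtain ⟨f, hfpm, rfl⟩ := pm_rename_of_not_last hpm hnd.1 hnd.2
    refine ⟨f, ⟨hfpm, (mem_neuralIdeal_rename_iff hfpm).mp hmem, ?_⟩, rfl⟩
    intro g hgpm hgmem hgdvd
    exact rename_injective _ (Fin.castSucc_injective n)
      (hmin (rename Fin.castSucc g) (pm_rename hgpm)
        ((mem_neuralIdeal_rename_iff hgpm).mpr hgmem) (map_dvd _ hgdvd))

end
end

section
/- Suppose n is a k-piercing of the code C ⊆ 2^[n] with associated interval [σ,τ]. Then CF(J_C) is the disjoint union of CF(J_{C\n}), the set {x_n x_i : i ∈ [n−1]\τ}, and the set {x_n(1−x_j) : j ∈ σ}. (Assume C contains ∅, every neuron appears in some codeword, and no two neurons appear in exactly the same codewords.) -/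
open MvPolynomial

noncomputable section

namespace CFP
open Finset MvPolynomial

variable {N : ℕ}

/-- The pseudo-monomial with positive part `a` and negative part `b`. -/
def pmP (a b : Finset (Fin N)) : PM N := (∏ i ∈ a, X i) * ∏ j ∈ b, (1 - X j)

lemma isPM_pmP {a b : Finset (Fin N)} (h : Disjoint a b) : IsPseudoMonomial (pmP a b) :=
  ⟨a, b, h, rfl⟩

lemma rho_eq (s : Finset (Fin N)) : rho s = pmP s sᶜ := rfl

lemma evalAt_pmP (c a b : Finset (Fin N)) :
    evalAt c (pmP a b) = if a ⊆ c ∧ Disjoint b c then 1 else 0 := by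
  classical
  simp only [evalAt, pmP, map_mul, map_prod, eval_X, map_sub, map_one]
  by_cases hac : a ⊆ c
  · by_cases hbc : Disjoint b c
    · rw [if_pos ⟨hac, hbc⟩]
      rw [Finset.prod_eq_one fun i hi => by rw [if_pos (hac hi)],
        Finset.prod_eq_one fun j hj => by
          rw [if_neg (Finset.disjoint_left.mp hbc hj), sub_zero], one_mul]
    · rw [if_neg (by tauto)]
      obtain ⟨j, hjb, hjc⟩ := Finset.not_disjoint_iff.mp hbc
      rw [Finset.prod_eq_zero hjb (by rw [if_pos hjc, sub_self]), mul_zero]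
  · rw [if_neg (by tauto)]
    obtain ⟨i, hia, hic⟩ := Finset.not_subset.mp hac
    rw [Finset.prod_eq_zero hia (by rw [if_neg hic]), zero_mul]

lemma pmP_ne_zero (a b : Finset (Fin N)) : pmP a b ≠ 0 := by
  apply mul_ne_zero
  · exact Finset.prod_ne_zero_iff.mpr fun i _ => X_ne_zero i
  · refine Finset.prod_ne_zero_iff.mpr fun j _ => ?_
    intro h
    have := congrArg constantCoeff h
    simp at this

lemma evalAt_rho_of_ne {s c : Finset (Fin N)} (h : s ≠ c) : evalAt c (rho s) = 0 := by
  rw [rho_eq, evalAt_pmP, if_neg]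
  rintro ⟨h1, h2⟩
  exact h (le_antisymm h1 (fun x hx => by
    by_contra hxs
    exact Finset.disjoint_left.mp h2 (Finset.mem_compl.mpr hxs) hx))

end CFP

namespace CFP
open Finset MvPolynomial

variable {N : ℕ}

lemma pmP_expand {a b : Finset (Fin N)} {t : Fin N} (hta : t ∉ a) (htb : t ∉ b) :
    pmP a b = pmP (insert t a) b + pmP a (insert t b) := by
  rw [pmP, pmP, pmP, Finset.prod_insert hta, Finset.prod_insert htb]
  ring

lemma sum_rho : ∀ (m : ℕ) (a b : Finset (Fin N)), Disjoint a b → ((a ∪ b)ᶜ).card = m →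
    pmP a b = ∑ t ∈ ((a ∪ b)ᶜ).powerset, rho (a ∪ t) := by
  intro m
  induction m with
  | zero =>
    intro a b hab hc
    rw [Finset.card_eq_zero] at hc
    have hb : b = aᶜ := by
      ext x
      simp only [Finset.mem_compl]
      constructor
      · intro hx hxa; exact Finset.disjoint_left.mp hab hxa hx
      · intro hx
        by_contra hxb
        have : x ∈ (a ∪ b)ᶜ := Finset.mem_compl.mpr (by simp [hx, hxb])
        simp [hc] at this
    rw [hc, Finset.powerset_empty, Finset.sum_singleton, Finset.union_empty, rho_eq, hb]
  | succ m ih =>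
    intro a b hab hc
    have hne : ((a ∪ b)ᶜ).Nonempty := Finset.card_pos.mp (by omega)
    obtain ⟨t, ht⟩ := hne
    have hta : t ∉ a := fun h => (Finset.mem_compl.mp ht) (Finset.mem_union_left _ h)
    have htb : t ∉ b := fun h => (Finset.mem_compl.mp ht) (Finset.mem_union_right _ h)
    have hK : (a ∪ b)ᶜ = insert t ((insert t a ∪ b)ᶜ) := by
      ext x
      simp only [Finset.mem_insert, Finset.mem_compl, Finset.mem_union]
      by_cases hxt : x = t
      · subst hxt; simp [hta, htb]
      · simp [hxt]
    have hcard1 : ((insert t a ∪ b)ᶜ).card = m := by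
      have htn : t ∉ (insert t a ∪ b)ᶜ := by simp
      have := congrArg Finset.card hK
      rw [Finset.card_insert_of_notMem htn] at this
      omega
    have hcard2 : ((a ∪ insert t b)ᶜ).card = m := by
      have : a ∪ insert t b = insert t a ∪ b := by
        ext x; simp only [Finset.mem_insert, Finset.mem_union, Finset.mem_compl]; tauto
      rw [this]; exact hcard1
    have hd1 : Disjoint (insert t a) b := by
      rw [Finset.insert_eq, Finset.disjoint_union_left]
      exact ⟨Finset.disjoint_singleton_left.mpr htb, hab⟩
    have hd2 : Disjoint a (insert t b) := by
      rw [Finset.insert_eq, Finset.disjoint_union_right]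
      exact ⟨Finset.disjoint_singleton_right.mpr hta, hab⟩
    rw [pmP_expand hta htb, ih _ _ hd1 hcard1, ih _ _ hd2 hcard2]
    have hsame : insert t a ∪ b = a ∪ insert t b := by
      ext x; simp only [Finset.mem_insert, Finset.mem_union]; tauto
    rw [← hsame, hK, Finset.sum_powerset_insert (by simp)]
    have hre : ∀ s ∈ ((insert t a ∪ b)ᶜ).powerset, rho (insert t a ∪ s) = rho (a ∪ insert t s) := by
      intro s _
      congr 1
      ext x; simp only [Finset.mem_insert, Finset.mem_union]; tauto
    rw [Finset.sum_congr rfl hre]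
    ring

end CFP

namespace CFP
open Finset MvPolynomial

variable {N : ℕ}

lemma evalAt_eq_zero_of_mem {C : Set (Finset (Fin N))} {f : PM N}
    (hf : f ∈ neuralIdeal C) {c : Finset (Fin N)} (hc : c ∈ C) : evalAt c f = 0 := by
  have : neuralIdeal C ≤ RingHom.ker (MvPolynomial.eval (fun i => if i ∈ c then (1 : ZMod 2) else 0)) := by
    rw [neuralIdeal, Ideal.span_le]
    rintro g ⟨s, hs, rfl⟩
    have hne : s ≠ c := fun h => hs (h ▸ hc)
    exact evalAt_rho_of_ne hne
  exact this hf

lemma pmP_mem_iff {C : Set (Finset (Fin N))} {a b : Finset (Fin N)} (hab : Disjoint a b) :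
    pmP a b ∈ neuralIdeal C ↔ ∀ c ∈ C, ¬(a ⊆ c ∧ Disjoint b c) := by
  constructor
  · intro hf c hc hcon
    have h0 := evalAt_eq_zero_of_mem hf hc
    rw [evalAt_pmP, if_pos hcon] at h0
    exact one_ne_zero h0
  · intro h
    rw [sum_rho ((a ∪ b)ᶜ).card a b hab rfl]
    apply Ideal.sum_mem
    intro t ht
    rw [Finset.mem_powerset] at ht
    apply Ideal.subset_span
    refine ⟨a ∪ t, fun hmem => ?_, rfl⟩
    refine h _ hmem ⟨Finset.subset_union_left, ?_⟩
    rw [Finset.disjoint_union_right]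
    refine ⟨hab.symm, ?_⟩
    rw [Finset.disjoint_right]
    intro x hxt hxb
    exact Finset.mem_compl.mp (ht hxt) (Finset.mem_union_right _ hxb)

lemma pmP_dvd_pmP {p q a b : Finset (Fin N)} (hpa : p ⊆ a) (hqb : q ⊆ b) :
    pmP p q ∣ pmP a b := by
  refine ⟨pmP (a \ p) (b \ q), ?_⟩
  rw [pmP, pmP, pmP, ← Finset.prod_sdiff hpa, ← Finset.prod_sdiff hqb]
  ring

lemma dvd_pmP_iff {p q a b : Finset (Fin N)} (hab : Disjoint a b) :
    pmP p q ∣ pmP a b ↔ p ⊆ a ∧ q ⊆ b := by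
  constructor
  · rintro ⟨r, hr⟩
    have key : ∀ c, (a ⊆ c ∧ Disjoint b c) → (p ⊆ c ∧ Disjoint q c) := by
      intro c hc
      have := congrArg (evalAt c) hr
      rw [evalAt_pmP, if_pos hc] at this
      simp only [evalAt, map_mul] at this
      by_contra hcon
      have h0 : evalAt c (pmP p q) = 0 := by rw [evalAt_pmP, if_neg hcon]
      rw [evalAt] at h0
      rw [h0, zero_mul] at this
      exact one_ne_zero (α := ZMod 2) this
    have h1 := key a ⟨le_refl a, hab.symm⟩
    have h2 := key bᶜ ⟨Finset.disjoint_right.mp hab.symm |> fun _ => by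
        intro x hx; exact Finset.mem_compl.mpr (Finset.disjoint_left.mp hab hx),
      Finset.disjoint_left.mpr fun {x} hx hxc => Finset.mem_compl.mp hxc hx⟩
    refine ⟨h1.1, fun x hx => ?_⟩
    by_contra hxb
    exact Finset.disjoint_left.mp h2.2 hx (Finset.mem_compl.mpr hxb)
  · rintro ⟨h1, h2⟩
    exact pmP_dvd_pmP h1 h2

end CFP

namespace CFP
open Finset MvPolynomial

variable {n : ℕ}

lemma subset_pair {α : Type*} [DecidableEq α] {s : Finset α} {i j : α} (h : s ⊆ {i, j}) :
    s = ∅ ∨ s = {i} ∨ s = {j} ∨ s = {i, j} := by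
  have hmem : ∀ x ∈ s, x = i ∨ x = j := fun x hx => by simpa using h hx
  by_cases hi : i ∈ s <;> by_cases hj : j ∈ s
  · refine Or.inr (Or.inr (Or.inr ?_))
    apply subset_antisymm h
    intro x hx
    rcases Finset.mem_insert.mp hx with rfl | hx
    · exact hi
    · rwa [Finset.mem_singleton.mp hx]
  · refine Or.inr (Or.inl ?_)
    ext x
    simp only [Finset.mem_singleton]
    constructor
    · intro hx; rcases hmem x hx with rfl | rfl
      · rfl
      · exact absurd hx hj
    · rintro rfl; exact hi
  · refine Or.inr (Or.inr (Or.inl ?_))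
    ext x
    simp only [Finset.mem_singleton]
    constructor
    · intro hx; rcases hmem x hx with rfl | rfl
      · exact absurd hx hi
      · rfl
    · rintro rfl; exact hj
  · left
    ext x
    simp only [Finset.notMem_empty, iff_false]
    intro hx
    rcases hmem x hx with rfl | rfl
    · exact hi hx
    · exact hj hx

lemma exists_pmP_rep {N : ℕ} {g : PM N} (h : IsPseudoMonomial g) :
    ∃ p q : Finset (Fin N), Disjoint p q ∧ g = pmP p q := h

def unmap (a : Finset (Fin (n + 1))) : Finset (Fin n) :=
  a.preimage Fin.castSucc (Fin.castSucc_injective n).injOn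

lemma map_unmap {a : Finset (Fin (n + 1))} (h : Fin.last n ∉ a) :
    (unmap a).map Fin.castSuccEmb = a := by
  ext x
  simp only [Finset.mem_map, unmap, Finset.mem_preimage]
  constructor
  · rintro ⟨y, hy, rfl⟩; exact hy
  · intro hx
    have hxl : x ≠ Fin.last n := fun e => h (e ▸ hx)
    obtain ⟨y, rfl⟩ := Fin.exists_castSucc_eq.mpr hxl
    exact ⟨y, hx, rfl⟩

lemma last_not_mem_map (s : Finset (Fin n)) :
    Fin.last n ∉ s.map Fin.castSuccEmb := by
  intro h
  obtain ⟨y, _, hy⟩ := Finset.mem_map.mp h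
  exact (Fin.castSucc_lt_last y).ne hy

lemma rename_pmP (a b : Finset (Fin n)) :
    rename (R := ZMod 2) Fin.castSucc (pmP a b) =
      pmP (a.map Fin.castSuccEmb) (b.map Fin.castSuccEmb) := by
  simp only [pmP, map_mul, map_prod, map_sub, map_one, rename_X, Finset.prod_map]
  rfl

lemma cond_erase {a b c : Finset (Fin (n + 1))} (ha : Fin.last n ∉ a) (hb : Fin.last n ∉ b) :
    (a ⊆ c ∧ Disjoint b c) ↔
      (a ⊆ c.erase (Fin.last n) ∧ Disjoint b (c.erase (Fin.last n))) := by
  constructor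
  · rintro ⟨h1, h2⟩
    refine ⟨fun x hx => Finset.mem_erase.mpr ⟨fun e => ha (e ▸ hx), h1 hx⟩,
      h2.mono_right (Finset.erase_subset _ _)⟩
  · rintro ⟨h1, h2⟩
    refine ⟨h1.trans (Finset.erase_subset _ _), ?_⟩
    rw [Finset.disjoint_left]
    intro x hxb hxc
    exact Finset.disjoint_left.mp h2 hxb
      (Finset.mem_erase.mpr ⟨fun e => hb (e ▸ hxb), hxc⟩)

lemma last_not_mem_of_mem_del {C : Set (Finset (Fin (n + 1)))} {c : Finset (Fin (n + 1))}
    (h : c ∈ del C (Fin.last n)) : Fin.last n ∉ c := by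
  obtain ⟨c₀, _, rfl⟩ := h
  exact Finset.notMem_erase _ _

lemma pmP_empty_empty {N : ℕ} : pmP (∅ : Finset (Fin N)) ∅ = 1 := by simp [pmP]
lemma pmP_single_empty {N : ℕ} (i : Fin N) : pmP {i} ∅ = X i := by simp [pmP]
lemma pmP_empty_single {N : ℕ} (j : Fin N) : pmP (∅ : Finset (Fin N)) {j} = 1 - X j := by
  simp [pmP]
lemma pmP_pair_empty {N : ℕ} {i j : Fin N} (h : i ≠ j) : pmP {i, j} ∅ = X i * X j := by
  simp [pmP, Finset.prod_pair h]
lemma pmP_single_single {N : ℕ} (i j : Fin N) : pmP {i} {j} = X i * (1 - X j) := by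
  simp [pmP]

end CFP

namespace CFP
open Finset MvPolynomial

variable {n : ℕ} {C : Set (Finset (Fin (n + 1)))} {σ τ : Finset (Fin (n + 1))}

lemma mem_cases
    (hC : C = del C (Fin.last n) ∪ Icc' (insert (Fin.last n) σ) (insert (Fin.last n) τ))
    {c : Finset (Fin (n + 1))} (hc : c ∈ C) :
    c ∈ del C (Fin.last n) ∨
      (insert (Fin.last n) σ ⊆ c ∧ c ⊆ insert (Fin.last n) τ) := by
  have : c ∈ del C (Fin.last n) ∪ Icc' (insert (Fin.last n) σ) (insert (Fin.last n) τ) := by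
    rw [← hC]; exact hc
  exact this

lemma memJ_iff_del (hστ : σ ⊆ τ) (hlast : Fin.last n ∉ τ)
    (hint : Icc' σ τ ⊆ del C (Fin.last n))
    (hC : C = del C (Fin.last n) ∪ Icc' (insert (Fin.last n) σ) (insert (Fin.last n) τ))
    {a b : Finset (Fin (n + 1))} (hab : Disjoint a b)
    (ha : Fin.last n ∉ a) (hb : Fin.last n ∉ b) :
    pmP a b ∈ neuralIdeal C ↔
      ∀ c ∈ del C (Fin.last n), ¬(a ⊆ c ∧ Disjoint b c) := by
  rw [pmP_mem_iff hab]
  constructor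
  · intro h c hc
    apply h
    rw [hC]
    exact Or.inl hc
  · intro h c hcC
    rcases mem_cases hC hcC with hdel | ⟨h1, h2⟩
    · exact h c hdel
    · have hc' : c.erase (Fin.last n) ∈ Icc' σ τ := by
        constructor
        · intro x hx
          exact Finset.mem_erase.mpr ⟨fun e => hlast (e ▸ hστ hx),
            h1 (Finset.mem_insert_of_mem hx)⟩
        · intro x hx
          obtain ⟨hxne, hxc⟩ := Finset.mem_erase.mp hx
          rcases Finset.mem_insert.mp (h2 hxc) with e | hm
          · exact absurd e hxne
          · exact hm
      rw [cond_erase ha hb]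
      exact h _ (hint hc')

lemma del_iff_delLast {a' b' : Finset (Fin n)} :
    (∀ c ∈ del C (Fin.last n),
        ¬(a'.map Fin.castSuccEmb ⊆ c ∧ Disjoint (b'.map Fin.castSuccEmb) c)) ↔
      ∀ d ∈ delLast C, ¬(a' ⊆ d ∧ Disjoint b' d) := by
  constructor
  · intro h d hd hcon
    obtain ⟨c₀, hc₀, hmap⟩ := hd
    refine h (d.map Fin.castSuccEmb) ⟨c₀, hc₀, hmap.symm⟩
      ⟨Finset.map_subset_map.mpr hcon.1, (Finset.disjoint_map _).mpr hcon.2⟩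
  · intro h c hc hcon
    have hlc : Fin.last n ∉ c := last_not_mem_of_mem_del hc
    obtain ⟨c₀, hc₀, hce⟩ := hc
    have hm : (unmap c).map Fin.castSuccEmb = c := map_unmap hlc
    refine h (unmap c) ⟨c₀, hc₀, by rw [hm, ← hce]⟩ ?_
    constructor
    · rw [← Finset.map_subset_map (f := Fin.castSuccEmb), hm]; exact hcon.1
    · rw [← Finset.disjoint_map Fin.castSuccEmb, hm]; exact hcon.2

lemma memJ_transfer (hστ : σ ⊆ τ) (hlast : Fin.last n ∉ τ)
    (hint : Icc' σ τ ⊆ del C (Fin.last n))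
    (hC : C = del C (Fin.last n) ∪ Icc' (insert (Fin.last n) σ) (insert (Fin.last n) τ))
    {a' b' : Finset (Fin n)} (hab : Disjoint a' b') :
    pmP (a'.map Fin.castSuccEmb) (b'.map Fin.castSuccEmb) ∈ neuralIdeal C ↔
      pmP a' b' ∈ neuralIdeal (delLast C) := by
  rw [memJ_iff_del hστ hlast hint hC ((Finset.disjoint_map _).mpr hab)
    (last_not_mem_map _) (last_not_mem_map _), del_iff_delLast, pmP_mem_iff hab]

lemma CF_transfer (hστ : σ ⊆ τ) (hlast : Fin.last n ∉ τ)
    (hint : Icc' σ τ ⊆ del C (Fin.last n))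
    (hC : C = del C (Fin.last n) ∪ Icc' (insert (Fin.last n) σ) (insert (Fin.last n) τ))
    {a' b' : Finset (Fin n)} (hab : Disjoint a' b') :
    pmP (a'.map Fin.castSuccEmb) (b'.map Fin.castSuccEmb) ∈ CF C ↔
      pmP a' b' ∈ CF (delLast C) := by
  have hinj := rename_injective (R := ZMod 2) _ (Fin.castSucc_injective n)
  constructor
  · rintro ⟨_, hJ, hmin⟩
    refine ⟨isPM_pmP hab, (memJ_transfer hστ hlast hint hC hab).mp hJ, ?_⟩
    intro g hg hgJ hdvd
    obtain ⟨p, q, hpq, rfl⟩ := exists_pmP_rep hg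
    obtain ⟨hp, hq⟩ := (dvd_pmP_iff hab).mp hdvd
    have hgJ' : pmP (p.map Fin.castSuccEmb) (q.map Fin.castSuccEmb) ∈ neuralIdeal C :=
      (memJ_transfer hστ hlast hint hC hpq).mpr hgJ
    have hdvd' : pmP (p.map Fin.castSuccEmb) (q.map Fin.castSuccEmb) ∣
        pmP (a'.map Fin.castSuccEmb) (b'.map Fin.castSuccEmb) :=
      pmP_dvd_pmP (Finset.map_subset_map.mpr hp) (Finset.map_subset_map.mpr hq)
    have heq := hmin _ (isPM_pmP ((Finset.disjoint_map _).mpr hpq)) hgJ' hdvd'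
    apply hinj
    rw [rename_pmP, rename_pmP, heq]
  · rintro ⟨_, hJ, hmin⟩
    refine ⟨isPM_pmP ((Finset.disjoint_map _).mpr hab),
      (memJ_transfer hστ hlast hint hC hab).mpr hJ, ?_⟩
    intro g hg hgJ hdvd
    obtain ⟨p, q, hpq, rfl⟩ := exists_pmP_rep hg
    obtain ⟨hp, hq⟩ := (dvd_pmP_iff ((Finset.disjoint_map _).mpr hab)).mp hdvd
    have hpl : Fin.last n ∉ p := fun h => last_not_mem_map _ (hp h)
    have hql : Fin.last n ∉ q := fun h => last_not_mem_map _ (hq h)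
    have hpm : (unmap p).map Fin.castSuccEmb = p := map_unmap hpl
    have hqm : (unmap q).map Fin.castSuccEmb = q := map_unmap hql
    have hpq' : Disjoint (unmap p) (unmap q) := by
      rw [← Finset.disjoint_map Fin.castSuccEmb, hpm, hqm]; exact hpq
    have hgJ' : pmP (unmap p) (unmap q) ∈ neuralIdeal (delLast C) := by
      rw [← memJ_transfer hστ hlast hint hC hpq', hpm, hqm]; exact hgJ
    have hdvd' : pmP (unmap p) (unmap q) ∣ pmP a' b' := by
      apply pmP_dvd_pmP
      · rw [← Finset.map_subset_map (f := Fin.castSuccEmb), hpm]; exact hp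
      · rw [← Finset.map_subset_map (f := Fin.castSuccEmb), hqm]; exact hq
    have heq := hmin _ (isPM_pmP hpq') hgJ' hdvd'
    calc pmP p q = pmP ((unmap p).map Fin.castSuccEmb) ((unmap q).map Fin.castSuccEmb) := by
          rw [hpm, hqm]
      _ = pmP (a'.map Fin.castSuccEmb) (b'.map Fin.castSuccEmb) := by
          rw [← rename_pmP, ← rename_pmP, heq]

end CFP

namespace CFP
open Finset MvPolynomial

variable {n : ℕ} {C : Set (Finset (Fin (n + 1)))} {σ τ : Finset (Fin (n + 1))}

lemma not_memJ_empty (hE : ∅ ∈ C) :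
    pmP (∅ : Finset (Fin (n + 1))) ∅ ∉ neuralIdeal C := by
  intro h
  exact (pmP_mem_iff (Finset.disjoint_empty_left _)).mp h ∅ hE
    ⟨Finset.empty_subset _, Finset.disjoint_empty_left _⟩

lemma insert_lastσ_mem (hστ : σ ⊆ τ)
    (hC : C = del C (Fin.last n) ∪ Icc' (insert (Fin.last n) σ) (insert (Fin.last n) τ)) :
    insert (Fin.last n) σ ∈ C := by
  rw [hC]
  exact Or.inr ⟨subset_refl _, Finset.insert_subset_insert _ hστ⟩

lemma not_memJ_Xlast (hστ : σ ⊆ τ)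
    (hC : C = del C (Fin.last n) ∪ Icc' (insert (Fin.last n) σ) (insert (Fin.last n) τ)) :
    pmP {Fin.last n} (∅ : Finset (Fin (n + 1))) ∉ neuralIdeal C := by
  intro h
  exact (pmP_mem_iff (Finset.disjoint_empty_right _)).mp h _ (insert_lastσ_mem hστ hC)
    ⟨Finset.singleton_subset_iff.mpr (Finset.mem_insert_self _ _),
      Finset.disjoint_empty_left _⟩

lemma not_memJ_Xi (hgood : GoodCode C) (i : Fin (n + 1)) :
    pmP {i} (∅ : Finset (Fin (n + 1))) ∉ neuralIdeal C := by
  intro h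
  obtain ⟨c, hc, hic⟩ := hgood.2.1 i
  exact (pmP_mem_iff (Finset.disjoint_empty_right _)).mp h c hc
    ⟨Finset.singleton_subset_iff.mpr hic, Finset.disjoint_empty_left _⟩

lemma not_memJ_one_sub (hE : ∅ ∈ C) (j : Fin (n + 1)) :
    pmP (∅ : Finset (Fin (n + 1))) {j} ∉ neuralIdeal C := by
  intro h
  exact (pmP_mem_iff (Finset.disjoint_empty_left _)).mp h ∅ hE
    ⟨Finset.empty_subset _, Finset.disjoint_empty_right _⟩

lemma pair_mem_CF (hgood : GoodCode C) (hστ : σ ⊆ τ)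
    (hC : C = del C (Fin.last n) ∪ Icc' (insert (Fin.last n) σ) (insert (Fin.last n) τ))
    {i : Fin (n + 1)} (hne : i ≠ Fin.last n) (hiτ : i ∉ τ) :
    pmP {Fin.last n, i} (∅ : Finset (Fin (n + 1))) ∈ CF C := by
  have hd : Disjoint ({Fin.last n, i} : Finset (Fin (n + 1))) ∅ :=
    Finset.disjoint_empty_right _
  refine ⟨isPM_pmP hd, ?_, ?_⟩
  · rw [pmP_mem_iff hd]
    rintro c hcC ⟨hsub, -⟩
    rcases mem_cases hC hcC with hdel | ⟨-, h2⟩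
    · exact last_not_mem_of_mem_del hdel (hsub (Finset.mem_insert_self _ _))
    · have : i ∈ insert (Fin.last n) τ :=
        h2 (hsub (Finset.mem_insert_of_mem (Finset.mem_singleton_self _)))
      rcases Finset.mem_insert.mp this with e | hm
      · exact hne e
      · exact hiτ hm
  · intro g hg hgJ hdvd
    obtain ⟨p, q, hpq, rfl⟩ := exists_pmP_rep hg
    obtain ⟨hp, hq⟩ := (dvd_pmP_iff hd).mp hdvd
    rw [Finset.subset_empty] at hq
    subst hq
    rcases subset_pair hp with rfl | rfl | rfl | rfl
    · exact absurd hgJ (not_memJ_empty hgood.1)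
    · exact absurd hgJ (not_memJ_Xlast hστ hC)
    · exact absurd hgJ (not_memJ_Xi hgood i)
    · rfl

lemma neg_mem_CF (hgood : GoodCode C) (hστ : σ ⊆ τ) (hlast : Fin.last n ∉ τ)
    (hC : C = del C (Fin.last n) ∪ Icc' (insert (Fin.last n) σ) (insert (Fin.last n) τ))
    {j : Fin (n + 1)} (hj : j ∈ σ) :
    pmP {Fin.last n} ({j} : Finset (Fin (n + 1))) ∈ CF C := by
  have hd : Disjoint ({Fin.last n} : Finset (Fin (n + 1))) {j} :=
    Finset.disjoint_singleton.mpr (fun e => hlast (e ▸ hστ hj))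
  refine ⟨isPM_pmP hd, ?_, ?_⟩
  · rw [pmP_mem_iff hd]
    rintro c hcC ⟨hsub, hdisj⟩
    rcases mem_cases hC hcC with hdel | ⟨h1, -⟩
    · exact last_not_mem_of_mem_del hdel (hsub (Finset.mem_singleton_self _))
    · exact Finset.disjoint_left.mp hdisj (Finset.mem_singleton_self _)
        (h1 (Finset.mem_insert_of_mem hj))
  · intro g hg hgJ hdvd
    obtain ⟨p, q, hpq, rfl⟩ := exists_pmP_rep hg
    obtain ⟨hp, hq⟩ := (dvd_pmP_iff hd).mp hdvd
    rcases Finset.subset_singleton_iff.mp hp with rfl | rfl <;>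
      rcases Finset.subset_singleton_iff.mp hq with rfl | rfl
    · exact absurd hgJ (not_memJ_empty hgood.1)
    · exact absurd hgJ (not_memJ_one_sub hgood.1 j)
    · exact absurd hgJ (not_memJ_Xlast hστ hC)
    · rfl

end CFP

namespace CFP
open Finset MvPolynomial

variable {n : ℕ} {C : Set (Finset (Fin (n + 1)))} {σ τ : Finset (Fin (n + 1))}

lemma icc_erase (hστ : σ ⊆ τ) (hlast : Fin.last n ∉ τ) {c : Finset (Fin (n + 1))}
    (h1 : insert (Fin.last n) σ ⊆ c) (h2 : c ⊆ insert (Fin.last n) τ) :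
    c.erase (Fin.last n) ∈ Icc' σ τ := by
  constructor
  · intro x hx
    exact Finset.mem_erase.mpr ⟨fun e => hlast (e ▸ hστ hx),
      h1 (Finset.mem_insert_of_mem hx)⟩
  · intro x hx
    obtain ⟨hxne, hxc⟩ := Finset.mem_erase.mp hx
    rcases Finset.mem_insert.mp (h2 hxc) with e | hm
    · exact absurd e hxne
    · exact hm

theorem CF_piercing_main (hgood : GoodCode C) (hστ : σ ⊆ τ) (hlast : Fin.last n ∉ τ)
    (hint : Icc' σ τ ⊆ del C (Fin.last n))
    (hC : C = del C (Fin.last n) ∪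
      Icc' (insert (Fin.last n) σ) (insert (Fin.last n) τ)) :
    CF C = (fun f : PM n => rename Fin.castSucc f) '' CF (delLast C) ∪
        {f | ∃ i : Fin (n + 1), i ≠ Fin.last n ∧ i ∉ τ ∧
          f = X (Fin.last n) * X i} ∪
        {f | ∃ j ∈ σ, f = X (Fin.last n) * (1 - X j)} := by
  ext f
  constructor
  · intro hf
    obtain ⟨a, b, hab, rfl⟩ := exists_pmP_rep hf.1
    obtain ⟨-, hJ, hmin⟩ := hf
    have hmem := (pmP_mem_iff hab).mp hJ
    by_cases hbl : Fin.last n ∈ b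
    · -- impossible: f would not be minimal
      exfalso
      have hal : Fin.last n ∉ a := fun h => Finset.disjoint_left.mp hab h hbl
      have hd' : Disjoint a (b.erase (Fin.last n)) :=
        hab.mono_right (Finset.erase_subset _ _)
      have hgJ : pmP a (b.erase (Fin.last n)) ∈ neuralIdeal C := by
        rw [pmP_mem_iff hd']
        rintro c hcC ⟨hsub, hdisj⟩
        rcases mem_cases hC hcC with hdel | ⟨h1, h2⟩
        · have hlc := last_not_mem_of_mem_del hdel
          exact hmem c hcC ⟨hsub, by
            rw [← Finset.insert_erase hbl, Finset.disjoint_insert_left]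
            exact ⟨hlc, hdisj⟩⟩
        · have hc' : c.erase (Fin.last n) ∈ Icc' σ τ := icc_erase hστ hlast h1 h2
          have hcC' : c.erase (Fin.last n) ∈ C := by
            rw [hC]; exact Or.inl (hint hc')
          apply hmem _ hcC'
          constructor
          · intro x hx
            exact Finset.mem_erase.mpr ⟨fun e => hal (e ▸ hx), hsub hx⟩
          · rw [Finset.disjoint_left]
            intro x hxb hxc
            obtain ⟨hxne, hxc'⟩ := Finset.mem_erase.mp hxc
            exact Finset.disjoint_left.mp hdisj
              (Finset.mem_erase.mpr ⟨fun e => hxne e, hxb⟩) hxc'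
      have heq := hmin _ (isPM_pmP hd') hgJ
        (pmP_dvd_pmP (subset_refl a) (Finset.erase_subset _ _))
      have hb' : pmP a b = pmP a b * (1 - X (Fin.last n)) := by
        conv_lhs => rw [show b = insert (Fin.last n) (b.erase (Fin.last n)) from
          (Finset.insert_erase hbl).symm]
        rw [← heq]
        rw [pmP, pmP, Finset.prod_insert (Finset.notMem_erase _ _)]
        ring
      have h0 : pmP a b * X (Fin.last n) = 0 := by
        calc pmP a b * X (Fin.last n)
            = pmP a b - pmP a b * (1 - X (Fin.last n)) := by ring
          _ = pmP a b - pmP a b := by rw [← hb']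
          _ = 0 := sub_self _
      rcases mul_eq_zero.mp h0 with h | h
      · exact pmP_ne_zero a b h
      · exact X_ne_zero _ h
    · by_cases hal : Fin.last n ∈ a
      · by_cases haτ : a.erase (Fin.last n) ⊆ τ
        · by_cases hbσ : Disjoint b σ
          · -- impossible: f would not vanish on the interval part
            exfalso
            set c := insert (Fin.last n) (σ ∪ a.erase (Fin.last n)) with hcdef
            have hcC : c ∈ C := by
              rw [hC]
              refine Or.inr ⟨Finset.insert_subset_insert _ Finset.subset_union_left,
                Finset.insert_subset_insert _ (Finset.union_subset hστ haτ)⟩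
            refine hmem c hcC ⟨?_, ?_⟩
            · intro x hx
              by_cases hxl : x = Fin.last n
              · exact hxl ▸ Finset.mem_insert_self _ _
              · exact Finset.mem_insert_of_mem
                  (Finset.mem_union_right _ (Finset.mem_erase.mpr ⟨hxl, hx⟩))
            · rw [hcdef, Finset.disjoint_insert_right, Finset.disjoint_union_right]
              exact ⟨hbl, hbσ, hab.symm.mono_right (Finset.erase_subset _ _)⟩
          · obtain ⟨j, hjb, hjσ⟩ := Finset.not_disjoint_iff.mp hbσ
            have hgCF := neg_mem_CF hgood hστ hlast hC hjσ
            have heq := hmin _ hgCF.1 hgCF.2.1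
              (pmP_dvd_pmP (Finset.singleton_subset_iff.mpr hal)
                (Finset.singleton_subset_iff.mpr hjb))
            refine Set.mem_union_right _ ⟨j, hjσ, ?_⟩
            rw [← heq, pmP_single_single]
        · obtain ⟨i, hia, hiτ⟩ := Finset.not_subset.mp haτ
          obtain ⟨hine, hia'⟩ := Finset.mem_erase.mp hia
          have hgCF := pair_mem_CF hgood hστ hC hine hiτ
          have heq := hmin _ hgCF.1 hgCF.2.1
            (pmP_dvd_pmP (Finset.insert_subset_iff.mpr
              ⟨hal, Finset.singleton_subset_iff.mpr hia'⟩) (Finset.empty_subset _))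
          refine Set.mem_union_left _ (Set.mem_union_right _ ⟨i, hine, hiτ, ?_⟩)
          rw [← heq, pmP_pair_empty (Ne.symm hine)]
      · have hma := map_unmap hal
        have hmb := map_unmap hbl
        have hab' : Disjoint (unmap a) (unmap b) := by
          rw [← Finset.disjoint_map Fin.castSuccEmb, hma, hmb]; exact hab
        refine Set.mem_union_left _ (Set.mem_union_left _
          ⟨pmP (unmap a) (unmap b), ?_, ?_⟩)
        · refine (CF_transfer hστ hlast hint hC hab').mp ?_
          rw [hma, hmb]
          exact ⟨isPM_pmP hab, hJ, hmin⟩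
        · show rename Fin.castSucc (pmP (unmap a) (unmap b)) = pmP a b
          rw [rename_pmP, hma, hmb]
  · rintro ((⟨f', hf', rfl⟩ | ⟨i, hine, hiτ, rfl⟩) | ⟨j, hjσ, rfl⟩)
    · obtain ⟨a', b', hab', hrep⟩ := exists_pmP_rep hf'.1
      rw [hrep] at hf' ⊢
      show rename Fin.castSucc (pmP a' b') ∈ CF C
      rw [rename_pmP]
      exact (CF_transfer hστ hlast hint hC hab').mpr hf'
    · rw [← pmP_pair_empty (Ne.symm hine)]
      exact pair_mem_CF hgood hστ hC hine hiτ
    · rw [← pmP_single_single]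
      exact neg_mem_CF hgood hστ hlast hC hjσ

end CFP

namespace CFP
open Finset MvPolynomial

variable {n : ℕ} {C : Set (Finset (Fin (n + 1)))} {σ τ : Finset (Fin (n + 1))}

lemma disj1 (hlast : Fin.last n ∉ τ) :
    Disjoint ((fun f : PM n => rename Fin.castSucc f) '' CF (delLast C))
      {f : PM (n + 1) | ∃ i : Fin (n + 1), i ≠ Fin.last n ∧ i ∉ τ ∧
        f = X (Fin.last n) * X i} := by
  rw [Set.disjoint_left]
  rintro f ⟨f', hf', rfl⟩ ⟨i, hine, hiτ, heq⟩
  obtain ⟨a', b', hab', hrep⟩ := exists_pmP_rep hf'.1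
  rw [hrep] at heq
  have heq' : pmP (a'.map Fin.castSuccEmb) (b'.map Fin.castSuccEmb) =
      pmP {Fin.last n, i} ∅ := by
    rw [← rename_pmP, pmP_pair_empty (Ne.symm hine)]
    exact heq
  have hdvd : pmP {Fin.last n, i} (∅ : Finset (Fin (n + 1))) ∣
      pmP (a'.map Fin.castSuccEmb) (b'.map Fin.castSuccEmb) := ⟨1, by rw [heq', mul_one]⟩
  have := ((dvd_pmP_iff ((Finset.disjoint_map _).mpr hab')).mp hdvd).1
  exact last_not_mem_map a' (this (Finset.mem_insert_self _ _))

lemma disj2 :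
    Disjoint ((fun f : PM n => rename Fin.castSucc f) '' CF (delLast C))
      {f : PM (n + 1) | ∃ j ∈ σ, f = X (Fin.last n) * (1 - X j)} := by
  rw [Set.disjoint_left]
  rintro f ⟨f', hf', rfl⟩ ⟨j, hjσ, heq⟩
  obtain ⟨a', b', hab', hrep⟩ := exists_pmP_rep hf'.1
  rw [hrep] at heq
  have heq' : pmP (a'.map Fin.castSuccEmb) (b'.map Fin.castSuccEmb) =
      pmP {Fin.last n} {j} := by
    rw [← rename_pmP, pmP_single_single]
    exact heq
  have hdvd : pmP ({Fin.last n} : Finset (Fin (n + 1))) {j} ∣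
      pmP (a'.map Fin.castSuccEmb) (b'.map Fin.castSuccEmb) := ⟨1, by rw [heq', mul_one]⟩
  have := ((dvd_pmP_iff ((Finset.disjoint_map _).mpr hab')).mp hdvd).1
  exact last_not_mem_map a' (this (Finset.mem_singleton_self _))

lemma disj3 :
    Disjoint {f : PM (n + 1) | ∃ i : Fin (n + 1), i ≠ Fin.last n ∧ i ∉ τ ∧
        f = X (Fin.last n) * X i}
      {f : PM (n + 1) | ∃ j ∈ σ, f = X (Fin.last n) * (1 - X j)} := by
  rw [Set.disjoint_left]
  rintro f ⟨i, hine, hiτ, rfl⟩ ⟨j, hjσ, heq⟩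
  have heq' : pmP ({Fin.last n, i} : Finset (Fin (n + 1))) ∅ = pmP {Fin.last n} {j} := by
    rw [pmP_pair_empty (Ne.symm hine), pmP_single_single]
    exact heq
  have hdvd : pmP ({Fin.last n} : Finset (Fin (n + 1))) {j} ∣ pmP {Fin.last n, i} ∅ :=
    ⟨1, by rw [heq', mul_one]⟩
  have := ((dvd_pmP_iff (Finset.disjoint_empty_right _)).mp hdvd).2
  exact Finset.notMem_empty j (this (Finset.mem_singleton_self _))

end CFP


/-- if `n` is a `k`-piercing of `C` with associated interval `[σ,τ]`,
then `CF(J_C)` is the disjoint union of `CF(J_{C\n})`, `{xₙxᵢ : i ∈ [n-1]\τ}`,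
and `{xₙ(1-xⱼ) : j ∈ σ}`. -/
theorem CF_of_piercing {n : ℕ} (C : Set (Finset (Fin (n + 1)))) (k : ℕ)
    (σ τ : Finset (Fin (n + 1))) (hgood : GoodCode C)
    (hστ : σ ⊆ τ) (hlast : Fin.last n ∉ τ) (hcard : (τ \ σ).card = k)
    (hint : Icc' σ τ ⊆ del C (Fin.last n))
    (hC : C = del C (Fin.last n) ∪
      Icc' (insert (Fin.last n) σ) (insert (Fin.last n) τ)) :
    CF C = (fun f : PM n => rename Fin.castSucc f) '' CF (delLast C) ∪
        {f | ∃ i : Fin (n + 1), i ≠ Fin.last n ∧ i ∉ τ ∧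
          f = X (Fin.last n) * X i} ∪
        {f | ∃ j ∈ σ, f = X (Fin.last n) * (1 - X j)} ∧
      Disjoint ((fun f : PM n => rename Fin.castSucc f) '' CF (delLast C))
        {f | ∃ i : Fin (n + 1), i ≠ Fin.last n ∧ i ∉ τ ∧
          f = X (Fin.last n) * X i} ∧
      Disjoint ((fun f : PM n => rename Fin.castSucc f) '' CF (delLast C))
        {f | ∃ j ∈ σ, f = X (Fin.last n) * (1 - X j)} ∧
      Disjoint {f : PM (n + 1) | ∃ i : Fin (n + 1), i ≠ Fin.last n ∧ i ∉ τ ∧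
          f = X (Fin.last n) * X i}
        {f | ∃ j ∈ σ, f = X (Fin.last n) * (1 - X j)} :=
  ⟨CFP.CF_piercing_main hgood hστ hlast hint hC, CFP.disj1 hlast, CFP.disj2, CFP.disj3⟩


end
end

section
/- Every inductively pierced code C ⊆ 2^[n] (satisfying the conventions that ∅ ∈ C, every neuron appears in some codeword, and no two neurons appear in exactly the same codewords) is degree two: every pseudo-monomial in CF(J_C) has degree exactly two. -/
open MvPolynomial

noncomputable section

-- auxiliary lemmas to be inserted before the theorem

def PMp {n : ℕ} (σ τ : Finset (Fin n)) : PM n :=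
  (∏ i ∈ σ, X i) * ∏ j ∈ τ, (1 - X j)

def Van {n : ℕ} (C : Set (Finset (Fin n))) (σ τ : Finset (Fin n)) : Prop :=
  ∀ c ∈ C, ¬(σ ⊆ c ∧ c ∩ τ = ∅)

lemma evalAt_PMp {n : ℕ} (c σ τ : Finset (Fin n)) :
    evalAt c (PMp σ τ) = if σ ⊆ c ∧ c ∩ τ = ∅ then 1 else 0 := by
  unfold evalAt PMp
  rw [map_mul, map_prod, map_prod]
  simp only [map_sub, map_one, eval_X]
  by_cases h : σ ⊆ c ∧ c ∩ τ = ∅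
  · rw [if_pos h]
    have h1 : (∏ i ∈ σ, (if i ∈ c then (1 : ZMod 2) else 0)) = 1 :=
      Finset.prod_eq_one fun i hi => by rw [if_pos (h.1 hi)]
    have h2 : (∏ j ∈ τ, ((1 : ZMod 2) - if j ∈ c then 1 else 0)) = 1 := by
      refine Finset.prod_eq_one fun j hj => ?_
      have hjc : j ∉ c := by
        intro hc
        have : j ∈ c ∩ τ := Finset.mem_inter.mpr ⟨hc, hj⟩
        rw [h.2] at this
        exact absurd this (Finset.notMem_empty j)
      rw [if_neg hjc, sub_zero]
    rw [h1, h2, mul_one]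
  · rw [if_neg h]
    rcases not_and_or.mp h with h1 | h2
    · obtain ⟨i, hiσ, hic⟩ := Finset.not_subset.mp h1
      have : (∏ i ∈ σ, (if i ∈ c then (1 : ZMod 2) else 0)) = 0 :=
        Finset.prod_eq_zero hiσ (by rw [if_neg hic])
      rw [this, zero_mul]
    · obtain ⟨x, hx⟩ := Finset.nonempty_iff_ne_empty.mpr h2
      obtain ⟨hxc, hxτ⟩ := Finset.mem_inter.mp hx
      have : (∏ j ∈ τ, ((1 : ZMod 2) - if j ∈ c then 1 else 0)) = 0 :=
        Finset.prod_eq_zero hxτ (by rw [if_pos hxc, sub_self])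
      rw [this, mul_zero]

lemma rho_eq_PMp {n : ℕ} (s : Finset (Fin n)) : rho s = PMp s sᶜ := rfl

lemma evalAt_rho_of_ne {n : ℕ} (c s : Finset (Fin n)) (h : c ≠ s) :
    evalAt c (rho s) = 0 := by
  rw [rho_eq_PMp, evalAt_PMp, if_neg]
  rintro ⟨h1, h2⟩
  apply h
  refine Finset.Subset.antisymm ?_ h1
  intro x hx
  by_contra hxs
  have : x ∈ c ∩ sᶜ := Finset.mem_inter.mpr ⟨hx, Finset.mem_compl.mpr hxs⟩
  rw [h2] at this
  exact absurd this (Finset.notMem_empty x)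

lemma neuralIdeal_vanish {n : ℕ} {C : Set (Finset (Fin n))} {f : PM n}
    (hf : f ∈ neuralIdeal C) (c : Finset (Fin n)) (hc : c ∈ C) :
    evalAt c f = 0 := by
  have hker : neuralIdeal C ≤
      RingHom.ker (MvPolynomial.eval (fun i : Fin n => if i ∈ c then (1 : ZMod 2) else 0)) := by
    rw [neuralIdeal, Ideal.span_le]
    rintro g ⟨s, hs, rfl⟩
    have hne : c ≠ s := fun h => hs (h ▸ hc)
    exact RingHom.mem_ker.mpr (evalAt_rho_of_ne c s hne)
  exact RingHom.mem_ker.mp (hker hf)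

lemma PMp_mem_of_Van {n : ℕ} {C : Set (Finset (Fin n))} {σ τ : Finset (Fin n)}
    (hd : Disjoint σ τ) (hv : Van C σ τ) : PMp σ τ ∈ neuralIdeal C := by
  classical
  set F := (σ ∪ τ)ᶜ with hF
  have key : PMp σ τ = ∑ u ∈ F.powerset, rho (σ ∪ u) := by
    have h1 : ∀ u ∈ F.powerset,
        rho (σ ∪ u) = PMp σ τ * ((∏ i ∈ u, X i) * ∏ j ∈ F \ u, (1 - X j)) := by
      intro u hu
      rw [Finset.mem_powerset] at hu
      have huσ : Disjoint σ u := by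
        rw [Finset.disjoint_left]
        intro x hxσ hxu
        have := hu hxu
        rw [hF, Finset.mem_compl] at this
        exact this (Finset.mem_union_left _ hxσ)
      have hcompl : (σ ∪ u)ᶜ = τ ∪ (F \ u) := by
        ext x
        have h2 : x ∈ τ → x ∉ σ := fun hh hs => Finset.disjoint_left.mp hd hs hh
        have h3 : x ∈ u → ¬(x ∈ σ ∨ x ∈ τ) := by
          intro hh
          have := hu hh
          rw [hF, Finset.mem_compl, Finset.mem_union] at this
          exact this
        simp only [Finset.mem_compl, Finset.mem_union, Finset.mem_sdiff, hF, not_or]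
        tauto
      have hdisj2 : Disjoint τ (F \ u) := by
        rw [Finset.disjoint_left]
        intro x hxτ hxF
        have := (Finset.mem_sdiff.mp hxF).1
        rw [hF, Finset.mem_compl] at this
        exact this (Finset.mem_union_right _ hxτ)
      show (∏ i ∈ σ ∪ u, X i) * ∏ j ∈ (σ ∪ u)ᶜ, (1 - X j) = _
      rw [hcompl, Finset.prod_union huσ, Finset.prod_union hdisj2]
      unfold PMp
      ring
    rw [Finset.sum_congr rfl h1, ← Finset.mul_sum]
    have hsum : (∑ u ∈ F.powerset, (∏ i ∈ u, X i) * ∏ j ∈ F \ u, ((1 : PM n) - X j)) = 1 := by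
      rw [← Finset.prod_add]
      refine Finset.prod_eq_one fun i _ => ?_
      ring
    rw [hsum, mul_one]
  rw [key]
  refine Ideal.sum_mem _ fun u hu => ?_
  rw [Finset.mem_powerset] at hu
  refine Ideal.subset_span ⟨σ ∪ u, ?_, rfl⟩
  intro hmem
  refine hv _ hmem ⟨Finset.subset_union_left, ?_⟩
  rw [Finset.eq_empty_iff_forall_notMem]
  intro x hx
  obtain ⟨hx1, hx2⟩ := Finset.mem_inter.mp hx
  rcases Finset.mem_union.mp hx1 with h | h
  · exact Finset.disjoint_left.mp hd h hx2
  · have := hu h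
    rw [hF, Finset.mem_compl] at this
    exact this (Finset.mem_union_right _ hx2)

lemma PMp_dvd {n : ℕ} {σ' σ τ' τ : Finset (Fin n)} (hs : σ' ⊆ σ) (ht : τ' ⊆ τ) :
    PMp σ' τ' ∣ PMp σ τ := by
  refine ⟨PMp (σ \ σ') (τ \ τ'), ?_⟩
  unfold PMp
  rw [← Finset.prod_sdiff hs, ← Finset.prod_sdiff ht]
  ring

/-- The key combinatorial lemma: in an inductively pierced code every vanishing
pair of total size at least 3 has a strictly smaller vanishing subpair. -/
lemma star_lemma {n k : ℕ} {C : Set (Finset (Fin n))} (h : InductivelyPierced k C) :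
    ∀ σ τ : Finset (Fin n), Disjoint σ τ → 3 ≤ σ.card + τ.card → Van C σ τ →
    ∃ σ' τ', σ' ⊆ σ ∧ τ' ⊆ τ ∧ σ'.card + τ'.card < σ.card + τ.card ∧ Van C σ' τ' := by
  induction h with
  | empty =>
    intro σ τ _ hcard hv
    have hσ : σ.Nonempty := by
      rw [Finset.nonempty_iff_ne_empty]
      intro hσ
      exact hv ∅ rfl ⟨by rw [hσ], Finset.empty_inter τ⟩
    obtain ⟨s, hs⟩ := hσ
    refine ⟨{s}, ∅, Finset.singleton_subset_iff.mpr hs, Finset.empty_subset τ, ?_, ?_⟩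
    · simp only [Finset.card_singleton, Finset.card_empty]
      omega
    · intro c hc hcon
      rw [Set.mem_singleton_iff] at hc
      subst hc
      have := hcon.1 (Finset.mem_singleton_self s)
      exact absurd this (Finset.notMem_empty s)
  | pierce C i k' hk hp hrec ih =>
    intro σ τ hdisj hcard hv
    obtain ⟨σ₀, τ₀, hστ₀, hiτ₀, hcard₀, hIcc, hEq⟩ := hp
    have hDC : del C i ⊆ C := Set.subset_union_left.trans hEq.symm.subset
    have hiD : ∀ d ∈ del C i, i ∉ d := by
      rintro d ⟨c, hc, rfl⟩
      exact Finset.notMem_erase i c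
    have hmemI : ∀ c ∈ C, i ∈ c → insert i σ₀ ⊆ c ∧ c ⊆ insert i τ₀ := by
      intro c hc hic
      rw [hEq] at hc
      rcases hc with hc | hc
      · exact absurd hic (hiD c hc)
      · exact hc
    by_cases hiσ : i ∈ σ
    · -- i ∈ σ : explicit small vanishing pair
      have hiτ : i ∉ τ := fun h => Finset.disjoint_left.mp hdisj hiσ h
      have key : ¬(σ.erase i ⊆ τ₀ ∧ σ₀ ∩ τ = ∅) := by
        rintro ⟨h1, h2⟩
        set c := insert i (σ₀ ∪ σ.erase i) with hc
        have hcC : c ∈ C := by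
          rw [hEq]
          right
          constructor
          · exact Finset.insert_subset_insert i Finset.subset_union_left
          · refine Finset.insert_subset_insert i (Finset.union_subset hστ₀ h1)
        refine hv c hcC ⟨?_, ?_⟩
        · intro x hx
          by_cases hxi : x = i
          · subst hxi; exact Finset.mem_insert_self x _
          · exact Finset.mem_insert_of_mem
              (Finset.mem_union_right _ (Finset.mem_erase.mpr ⟨hxi, hx⟩))
        · rw [Finset.eq_empty_iff_forall_notMem]
          intro x hx
          obtain ⟨hx1, hx2⟩ := Finset.mem_inter.mp hx
          rcases Finset.mem_insert.mp hx1 with rfl | hx1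
          · exact hiτ hx2
          · rcases Finset.mem_union.mp hx1 with hx1 | hx1
            · have : x ∈ σ₀ ∩ τ := Finset.mem_inter.mpr ⟨hx1, hx2⟩
              rw [h2] at this
              exact absurd this (Finset.notMem_empty x)
            · exact Finset.disjoint_left.mp hdisj (Finset.mem_of_mem_erase hx1) hx2
      rcases not_and_or.mp key with h1 | h2
      · obtain ⟨s, hsσ₁, hsτ₀⟩ := Finset.not_subset.mp h1
        have hsi : s ≠ i := (Finset.mem_erase.mp hsσ₁).1
        refine ⟨{i, s}, ∅, ?_, Finset.empty_subset τ, ?_, ?_⟩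
        · exact Finset.insert_subset hiσ
            (Finset.singleton_subset_iff.mpr (Finset.mem_of_mem_erase hsσ₁))
        · have hpair : ({i, s} : Finset (Fin n)).card = 2 := Finset.card_pair (Ne.symm hsi)
          simp only [Finset.card_empty]
          omega
        · rintro c hc ⟨hsub, -⟩
          have hic : i ∈ c := hsub (Finset.mem_insert_self i _)
          have hsc : s ∈ c := hsub (Finset.mem_insert_of_mem (Finset.mem_singleton_self s))
          have := (hmemI c hc hic).2 hsc
          rcases Finset.mem_insert.mp this with h | h
          · exact hsi h
          · exact hsτ₀ h
      · obtain ⟨t, ht⟩ := Finset.nonempty_iff_ne_empty.mpr h2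
        obtain ⟨htσ₀, htτ⟩ := Finset.mem_inter.mp ht
        refine ⟨{i}, {t}, Finset.singleton_subset_iff.mpr hiσ,
          Finset.singleton_subset_iff.mpr htτ, ?_, ?_⟩
        · simp only [Finset.card_singleton]; omega
        · rintro c hc ⟨hsub, hint⟩
          have hic : i ∈ c := hsub (Finset.mem_singleton_self i)
          have htc : t ∈ c := (hmemI c hc hic).1 (Finset.mem_insert_of_mem htσ₀)
          have : t ∈ c ∩ {t} := Finset.mem_inter.mpr ⟨htc, Finset.mem_singleton_self t⟩
          rw [hint] at this
          exact absurd this (Finset.notMem_empty t)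
    · -- i ∉ σ : descend to the deletion
      have hvD : Van (del C i) σ (τ.erase i) := by
        rintro d hd ⟨h1, h2⟩
        refine hv d (hDC hd) ⟨h1, ?_⟩
        rw [Finset.eq_empty_iff_forall_notMem]
        intro x hx
        obtain ⟨hx1, hx2⟩ := Finset.mem_inter.mp hx
        have hxi : x ≠ i := fun h => hiD d hd (h ▸ hx1)
        have : x ∈ d ∩ τ.erase i :=
          Finset.mem_inter.mpr ⟨hx1, Finset.mem_erase.mpr ⟨hxi, hx2⟩⟩
        rw [h2] at this
        exact absurd this (Finset.notMem_empty x)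
      have transfer : ∀ σ' τ' : Finset (Fin n), σ' ⊆ σ → i ∉ τ' →
          Van (del C i) σ' τ' → Van C σ' τ' := by
        rintro σ' τ' hs hiτ' hvan c hc ⟨h1, h2⟩
        have hd : c.erase i ∈ del C i := ⟨c, hc, rfl⟩
        refine hvan _ hd ⟨?_, ?_⟩
        · intro x hx
          exact Finset.mem_erase.mpr ⟨fun h => hiσ (hs (h ▸ hx)), h1 hx⟩
        · rw [Finset.eq_empty_iff_forall_notMem]
          intro x hx
          obtain ⟨hx1, hx2⟩ := Finset.mem_inter.mp hx
          have : x ∈ c ∩ τ' := Finset.mem_inter.mpr ⟨Finset.mem_of_mem_erase hx1, hx2⟩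
          rw [h2] at this
          exact absurd this (Finset.notMem_empty x)
      by_cases h3 : 3 ≤ σ.card + (τ.erase i).card
      · obtain ⟨σ', τ', hs, ht, hlt, hvan⟩ :=
          ih σ (τ.erase i) (hdisj.mono_right (Finset.erase_subset i τ)) h3 hvD
        refine ⟨σ', τ', hs, ht.trans (Finset.erase_subset i τ), ?_,
          transfer σ' τ' hs (fun hmem => (Finset.mem_erase.mp (ht hmem)).1 rfl) hvan⟩
        have : (τ.erase i).card ≤ τ.card := Finset.card_le_card (Finset.erase_subset i τ)
        omega
      · have hiτ : i ∈ τ := by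
          by_contra hiτ
          rw [Finset.erase_eq_of_notMem hiτ] at h3
          exact h3 hcard
        refine ⟨σ, τ.erase i, Finset.Subset.refl σ, Finset.erase_subset i τ, ?_,
          transfer σ (τ.erase i) (Finset.Subset.refl σ) (Finset.notMem_erase i τ) hvD⟩
        have := Finset.card_erase_of_mem hiτ
        have : 1 ≤ τ.card := Finset.card_pos.mpr ⟨i, hiτ⟩
        have := Finset.card_erase_of_mem hiτ
        omega

lemma Finsupp_pair_sum {n : ℕ} (a b : Fin n) :
    ((Finsupp.single a 1 + Finsupp.single b 1).sum fun _ e => e) = 2 := by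
  rw [Finsupp.sum_add_index' (fun _ => rfl) (fun _ _ _ => rfl),
    Finsupp.sum_single_index rfl, Finsupp.sum_single_index rfl]

lemma X_mul_X_eq {n : ℕ} (a b : Fin n) :
    (X a * X b : PM n) = monomial (Finsupp.single a 1 + Finsupp.single b 1) 1 := by
  rw [MvPolynomial.X, MvPolynomial.X, monomial_mul, one_mul]

lemma single_ne_pair {n : ℕ} {a b : Fin n} (h : a ≠ b) (x : Fin n) :
    Finsupp.single x 1 ≠ Finsupp.single a 1 + Finsupp.single b 1 := by
  intro he
  by_cases hxb : x = b
  · subst hxb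
    have h1 := DFunLike.congr_fun he a
    simp only [Finsupp.add_apply, Finsupp.single_apply] at h1
    simp at h1
  · have h2 := DFunLike.congr_fun he b
    simp only [Finsupp.add_apply, Finsupp.single_apply] at h2
    simp [hxb, h] at h2

lemma totalDegree_XX {n : ℕ} {a b : Fin n} (h : a ≠ b) :
    (X a * X b : PM n).totalDegree = 2 := by
  rw [X_mul_X_eq, totalDegree_monomial _ one_ne_zero, Finsupp_pair_sum]

lemma totalDegree_X_one_sub {n : ℕ} {a b : Fin n} (h : a ≠ b) :
    (X a * (1 - X b) : PM n).totalDegree = 2 := by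
  have hexp : (X a * (1 - X b) : PM n) = X a - X a * X b := by ring
  refine le_antisymm ?_ ?_
  · calc (X a * (1 - X b) : PM n).totalDegree
        ≤ (X a : PM n).totalDegree + (1 - X b : PM n).totalDegree := totalDegree_mul _ _
      _ ≤ 1 + 1 := by
          refine add_le_add (le_of_eq (totalDegree_X a)) ?_
          refine (totalDegree_sub _ _).trans ?_
          rw [totalDegree_one, totalDegree_X]
          simp
      _ = 2 := rfl
  · have hcoeff : coeff (Finsupp.single a 1 + Finsupp.single b 1) (X a * (1 - X b) : PM n) ≠ 0 := by
      rw [hexp, coeff_sub, X_mul_X_eq, coeff_monomial, if_pos rfl, coeff_X',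
        if_neg (single_ne_pair h a)]
      decide
    have := le_totalDegree (p := (X a * (1 - X b) : PM n)) (mem_support_iff.mpr hcoeff)
    rwa [Finsupp_pair_sum] at this

lemma totalDegree_one_sub_one_sub {n : ℕ} {a b : Fin n} (h : a ≠ b) :
    ((1 - X a) * (1 - X b) : PM n).totalDegree = 2 := by
  have hexp : ((1 - X a) * (1 - X b) : PM n) = 1 - X a - X b + X a * X b := by ring
  refine le_antisymm ?_ ?_
  · calc ((1 - X a) * (1 - X b) : PM n).totalDegree
        ≤ (1 - X a : PM n).totalDegree + (1 - X b : PM n).totalDegree := totalDegree_mul _ _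
      _ ≤ 1 + 1 := by
          refine add_le_add ?_ ?_ <;>
          · refine (totalDegree_sub _ _).trans ?_
            rw [totalDegree_one, totalDegree_X]
            simp
      _ = 2 := rfl
  · have hzero : (0 : Fin n →₀ ℕ) ≠ Finsupp.single a 1 + Finsupp.single b 1 := by
      intro he
      have h1 := DFunLike.congr_fun he a
      simp only [Finsupp.coe_zero, Pi.zero_apply, Finsupp.add_apply, Finsupp.single_apply] at h1
      simp [Ne.symm h] at h1
    have hcoeff : coeff (Finsupp.single a 1 + Finsupp.single b 1)
        ((1 - X a) * (1 - X b) : PM n) ≠ 0 := by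
      rw [hexp, coeff_add, coeff_sub, coeff_sub, X_mul_X_eq, coeff_monomial, if_pos rfl,
        coeff_X', if_neg (single_ne_pair h a), coeff_X', if_neg (single_ne_pair h b),
        coeff_one, if_neg hzero]
      decide
    have := le_totalDegree (p := ((1 - X a) * (1 - X b) : PM n)) (mem_support_iff.mpr hcoeff)
    rwa [Finsupp_pair_sum] at this


/-- every inductively pierced code is degree two. -/
theorem inductivelyPierced_degreeTwo {n : ℕ} (C : Set (Finset (Fin n)))
    (hgood : GoodCode C) (hip : ∃ k, InductivelyPierced k C) :
    DegreeTwo C := by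
  obtain ⟨hempty, hall, -⟩ := hgood
  obtain ⟨k, hk⟩ := hip
  rintro f ⟨⟨σ, τ, hdisj, rfl⟩, hJ, hmin⟩
  have hPMp : ((∏ i ∈ σ, X i) * ∏ j ∈ τ, (1 - X j) : PM n) = PMp σ τ := rfl
  rw [hPMp] at hJ hmin ⊢
  have hvan : Van C σ τ := by
    rintro c hc ⟨h1, h2⟩
    have h0 := neuralIdeal_vanish hJ c hc
    rw [evalAt_PMp, if_pos ⟨h1, h2⟩] at h0
    exact one_ne_zero h0
  have hσne : σ ≠ ∅ := by
    intro h
    exact hvan ∅ hempty ⟨by rw [h], Finset.empty_inter τ⟩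
  have hnot3 : ¬ 3 ≤ σ.card + τ.card := by
    intro h3
    obtain ⟨σ', τ', hs, ht, hlt, hv'⟩ := star_lemma hk σ τ hdisj h3 hvan
    have hd' : Disjoint σ' τ' := hdisj.mono hs ht
    have hg : PMp σ' τ' ∈ neuralIdeal C := PMp_mem_of_Van hd' hv'
    have heq : PMp σ' τ' = PMp σ τ :=
      hmin (PMp σ' τ') ⟨σ', τ', hd', rfl⟩ hg (PMp_dvd hs ht)
    by_cases hσσ : σ' = σ
    · subst hσσ
      have hττ : τ' ≠ τ := by
        intro h; subst h; omega
      obtain ⟨t, htτ, htτ'⟩ := Finset.exists_of_ssubset (ht.ssubset_of_ne hττ)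
      have e1 : evalAt (σ' ∪ {t}) (PMp σ' τ') = 1 := by
        rw [evalAt_PMp, if_pos]
        refine ⟨Finset.subset_union_left, ?_⟩
        rw [Finset.eq_empty_iff_forall_notMem]
        intro x hx
        obtain ⟨hx1, hx2⟩ := Finset.mem_inter.mp hx
        rcases Finset.mem_union.mp hx1 with h | h
        · exact Finset.disjoint_left.mp hd' h hx2
        · rw [Finset.mem_singleton] at h; subst h; exact htτ' hx2
      have e2 : evalAt (σ' ∪ {t}) (PMp σ' τ) = 0 := by
        rw [evalAt_PMp, if_neg]
        rintro ⟨-, h2⟩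
        have : t ∈ (σ' ∪ {t}) ∩ τ := Finset.mem_inter.mpr
          ⟨Finset.mem_union_right _ (Finset.mem_singleton_self t), htτ⟩
        rw [h2] at this
        exact absurd this (Finset.notMem_empty t)
      rw [heq, e2] at e1
      exact one_ne_zero e1.symm
    · obtain ⟨x, hxσ, hxσ'⟩ := Finset.exists_of_ssubset (hs.ssubset_of_ne hσσ)
      have e1 : evalAt σ' (PMp σ' τ') = 1 := by
        rw [evalAt_PMp, if_pos]
        exact ⟨Finset.Subset.refl σ', Finset.disjoint_iff_inter_eq_empty.mp hd'⟩
      have e2 : evalAt σ' (PMp σ τ) = 0 := by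
        rw [evalAt_PMp, if_neg]
        rintro ⟨h1, -⟩
        exact hxσ' (h1 hxσ)
      rw [heq, e2] at e1
      exact one_ne_zero e1.symm
  have hσ1 : 1 ≤ σ.card := Finset.card_pos.mpr (Finset.nonempty_iff_ne_empty.mpr hσne)
  have h2lt : ¬(σ.card + τ.card < 2) := by
    intro hlt
    have hσeq : σ.card = 1 := by omega
    have hτeq : τ.card = 0 := by omega
    obtain ⟨a, ha⟩ := Finset.card_eq_one.mp hσeq
    obtain ⟨c, hc, hac⟩ := hall a
    refine hvan c hc ⟨?_, ?_⟩
    · rw [ha]; exact Finset.singleton_subset_iff.mpr hac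
    · rw [Finset.card_eq_zero.mp hτeq, Finset.inter_empty]
  have hcard2 : σ.card + τ.card = 2 := by omega
  -- now compute the degree
  rcases Nat.lt_or_ge σ.card 2 with hσlt | hσge
  · -- σ.card = 1, τ.card = 1
    have hσeq : σ.card = 1 := by omega
    have hτeq : τ.card = 1 := by omega
    obtain ⟨a, ha⟩ := Finset.card_eq_one.mp hσeq
    obtain ⟨b, hb⟩ := Finset.card_eq_one.mp hτeq
    have hab : a ≠ b := by
      rintro rfl
      subst ha; subst hb
      exact Finset.disjoint_left.mp hdisj (Finset.mem_singleton_self a)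
        (Finset.mem_singleton_self a)
    subst ha; subst hb
    unfold PMp
    rw [Finset.prod_singleton, Finset.prod_singleton]
    exact totalDegree_X_one_sub hab
  · -- σ.card = 2, τ = ∅
    have hσeq : σ.card = 2 := by omega
    have hτeq : τ = ∅ := Finset.card_eq_zero.mp (by omega)
    obtain ⟨a, b, hab, hσ⟩ := Finset.card_eq_two.mp hσeq
    subst hσ; subst hτeq
    unfold PMp
    rw [Finset.prod_pair hab, Finset.prod_empty, mul_one]
    exact totalDegree_XX hab


end
end
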